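/- arXiv:1407.1482 — 5 statements merged into one kernel-verified Lean document; each statement's English description precedes it below -/
import Mathlib

section
/- A graph G is paw-free if and only if every vertex subset S of G inducing a triangle-containing connected subgraph induces a complete multipartite graph; more precisely (Olariu's theorem): a graph is paw-free if and only if each of its connected components is triangle-free or complete multipartite. -/
/-!
In a paw-free graph every neighbour of a vertex lying in a triangle lies in a triangle too, so
in a component containing a triangle every vertex does. For an edge `uw` with `u` in a triangle,
the vertices adjacent to `u` or `w` form a set closed under adjacency (a neighbour outside it
would complete a paw), hence the whole component. So inside that component no vertex misses
both ends of an edge, i.e. non-adjacency is transitive. Conversely, a paw `abc` + `cd` lies in a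
single component, which contains the triangle `abc` and has `a ≁ d ≁ b` with `a ∼ b`.
-/

/-- The paw: a triangle `{0,1,2}` together with a pendant vertex `3` adjacent to `2`. -/
def paw : SimpleGraph (Fin 4) :=
  SimpleGraph.fromEdgeSet {s(0, 1), s(0, 2), s(1, 2), s(2, 3)}

/-- A graph is complete multipartite iff non-adjacency is transitive, i.e. the vertex set can
be partitioned so that two vertices are adjacent iff they lie in distinct parts. -/
def IsCompleteMultipartite {V : Type*} (G : SimpleGraph V) : Prop :=
  ∀ u v w : V, ¬ G.Adj u v → ¬ G.Adj v w → ¬ G.Adj u w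

namespace SimpleGraph

variable {V : Type*} {G : SimpleGraph V}

def NoInducedPaw (G : SimpleGraph V) : Prop :=
  ∀ ⦃a b c d : V⦄, G.Adj a b → G.Adj a c → G.Adj b c → G.Adj c d →
    G.Adj a d ∨ G.Adj b d

theorem isEmpty_paw_embedding_iff : IsEmpty (paw ↪g G) ↔ G.NoInducedPaw := by
  refine ⟨fun H a b c d hab hac hbc hcd => ?_, fun H => ⟨fun f => ?_⟩⟩
  · by_contra! ⟨had, hbd⟩
    have hda : a ≠ d := fun h => hbd (h ▸ hab.symm)
    have hdb : b ≠ d := fun h => had (h ▸ hab)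
    have hdc : c ≠ d := fun h => had (h ▸ hac)
    have hda' : ¬ G.Adj d a := fun h => had h.symm
    have hdb' : ¬ G.Adj d b := fun h => hbd h.symm
    refine H.elim ⟨⟨![a, b, c, d], fun i j hij => ?_⟩, fun {i j} => ?_⟩
    · fin_cases i <;> fin_cases j <;>
        simp_all [hab.ne, hac.ne, hbc.ne, hab.ne', hac.ne', hbc.ne']
    · change G.Adj (![a, b, c, d] i) (![a, b, c, d] j) ↔ paw.Adj i j
      fin_cases i <;> fin_cases j <;>
        simp [paw, hab, hac, hbc, hcd, hab.symm, hac.symm, hbc.symm, hcd.symm, had, hbd,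
          hda', hdb']
  · have hf : ∀ i j, G.Adj (f i) (f j) ↔ paw.Adj i j := fun i j => f.map_rel_iff
    have := H ((hf 0 1).2 (by simp [paw])) ((hf 0 2).2 (by simp [paw]))
      ((hf 1 2).2 (by simp [paw])) ((hf 2 3).2 (by simp [paw]))
    simp only [hf] at this
    simp [paw] at this

def InTriangle (G : SimpleGraph V) (x : V) : Prop :=
  ∃ a b, G.Adj x a ∧ G.Adj x b ∧ G.Adj a b

theorem cliqueFree_three_iff_forall_not_inTriangle :
    G.CliqueFree 3 ↔ ∀ x, ¬ G.InTriangle x := by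
  classical
  simp only [CliqueFree, is3Clique_iff, InTriangle]
  grind

theorem Reachable.of_adj_closed {P : V → Prop} (hP : ∀ ⦃x y⦄, G.Adj x y → P x → P y)
    {u v : V} (huv : G.Reachable u v) (hu : P u) : P v := by
  rw [reachable_iff_reflTransGen] at huv
  induction huv with
  | refl => exact hu
  | tail _ hxy ih => exact hP hxy ih

namespace NoInducedPaw

variable (H : G.NoInducedPaw)
include H

theorem exists_adj_adj_of_inTriangle {u w : V} (hu : G.InTriangle u) (huw : G.Adj u w) :
    ∃ t, G.Adj t u ∧ G.Adj t w := by
  obtain ⟨a, b, hua, hub, hab⟩ := hu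
  rcases H hab hua.symm hub.symm huw with haw | hbw
  · exact ⟨a, hua.symm, haw⟩
  · exact ⟨b, hub.symm, hbw⟩

theorem inTriangle_of_reachable {u v : V} (hu : G.InTriangle u) (huv : G.Reachable u v) :
    G.InTriangle v := by
  refine huv.of_adj_closed (fun x y hxy hx => ?_) hu
  obtain ⟨t, htx, hty⟩ := H.exists_adj_adj_of_inTriangle hx hxy
  exact ⟨t, x, hty.symm, hxy.symm, htx⟩

/-- Otherwise `v` is a pendant vertex at `m` of the triangle `u w m`; or, for a common neighbour
`t` of `u` and `w`, paw-freeness forces `t ∼ m`, then `t ∼ v`, and `v` is a pendant vertex at `t`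
of the triangle `u w t`. -/
theorem adj_or_adj_of_adj_adj {u w m v : V} (hu : G.InTriangle u) (huw : G.Adj u w)
    (hmu : G.Adj m u) (hmv : G.Adj m v) : G.Adj u v ∨ G.Adj w v := by
  by_contra! ⟨huv, hwv⟩
  by_cases hmw : G.Adj m w
  · exact (H huw hmu.symm hmw.symm hmv).elim huv hwv
  obtain ⟨t, htu, htw⟩ := H.exists_adj_adj_of_inTriangle hu huw
  have hmt : G.Adj t m := (H htw.symm huw.symm htu hmu.symm).resolve_left (hmw ·.symm)
  have htv : G.Adj t v := (H htu.symm hmu.symm hmt hmv).resolve_left huv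
  exact (H huw htu.symm htw.symm htv).elim huv hwv

theorem adj_or_adj_of_reachable {u w v : V} (hu : G.InTriangle u) (huw : G.Adj u w)
    (huv : G.Reachable u v) : G.Adj u v ∨ G.Adj w v := by
  have hw : G.InTriangle w := H.inTriangle_of_reachable hu huw.reachable
  refine huv.of_adj_closed (P := fun v => G.Adj u v ∨ G.Adj w v) (fun x y hxy hx => ?_)
    (Or.inr huw.symm)
  rcases hx with hux | hwx
  · exact H.adj_or_adj_of_adj_adj hu huw hux.symm hxy
  · exact (H.adj_or_adj_of_adj_adj hw huw.symm hwx.symm hxy).symm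

theorem isCompleteMultipartite_induce_supp {c : G.ConnectedComponent}
    (hc : ¬ (G.induce c.supp).CliqueFree 3) :
    _root_.IsCompleteMultipartite (G.induce c.supp) := by
  rw [cliqueFree_three_iff_forall_not_inTriangle] at hc
  push Not at hc
  obtain ⟨x, a, b, hxa, hxb, hab⟩ := hc
  rintro ⟨u, hu⟩ ⟨v, hv⟩ ⟨w, hw⟩ huv hvw huw
  simp only [comap_adj, Function.Embedding.coe_subtype] at huv hvw huw
  have hut : G.InTriangle u :=
    H.inTriangle_of_reachable ⟨a, b, hxa, hxb, hab⟩ (c.reachable_of_mem_supp x.2 hu)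
  rcases H.adj_or_adj_of_reachable hut huw (c.reachable_of_mem_supp hu hv) with huv' | hwv
  · exact huv huv'
  · exact hvw hwv.symm

end NoInducedPaw

end SimpleGraph

theorem stmt3_general {V : Type*} (G : SimpleGraph V) :
    IsEmpty (paw ↪g G) ↔
      ∀ c : G.ConnectedComponent,
        (G.induce c.supp).CliqueFree 3 ∨ IsCompleteMultipartite (G.induce c.supp) := by
  rw [SimpleGraph.isEmpty_paw_embedding_iff]
  refine ⟨fun H c => or_iff_not_imp_left.2 H.isCompleteMultipartite_induce_supp,
    fun h a b c d hab hac hbc hcd => ?_⟩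
  by_contra! ⟨had, hbd⟩
  set C := G.connectedComponentMk c
  have hc : c ∈ C.supp := rfl
  have ha : a ∈ C.supp := C.mem_supp_of_adj_mem_supp hc hac.symm
  have hb : b ∈ C.supp := C.mem_supp_of_adj_mem_supp hc hbc.symm
  have hd : d ∈ C.supp := C.mem_supp_of_adj_mem_supp hc hcd
  rcases h C with hC | hC
  · exact SimpleGraph.cliqueFree_three_iff_forall_not_inTriangle.1 hC ⟨a, ha⟩
      ⟨⟨b, hb⟩, ⟨c, hc⟩, hab, hac, hbc⟩
  · exact hC ⟨a, ha⟩ ⟨d, hd⟩ ⟨b, hb⟩ had (hbd ·.symm) hab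

/-- Olariu's theorem: a graph is paw-free iff each of its connected components is
triangle-free or complete multipartite. -/
theorem stmt3 {V : Type*} [Fintype V] (G : SimpleGraph V) :
    IsEmpty (paw ↪g G) ↔
      ∀ c : G.ConnectedComponent,
        (G.induce c.supp).CliqueFree 3 ∨ IsCompleteMultipartite (G.induce c.supp) :=
  stmt3_general G
end

section
/- Every triangle-free graph with no induced path on r vertices is (r-1)-colourable, for r ≥ 3. -/
/-!
Gyárfás' path argument. Let `G` be connected, triangle-free and not `(n + 1)`-colourable, and
let `q` be any vertex. The neighbourhood `N(q)` is independent, so `G - N(q)` is not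
`n`-colourable, and neither is one of its components `D`; this component is not `{q}`, so it avoids
`q`, and by connectivity it is adjacent to some `w ∈ N(q)`. Induction inside `G[D ∪ {w}]` gives
an induced path on `n + 1` vertices starting at `w` whose other vertices lie in `D`, hence miss `q`
and its neighbours, and prepending `q` gives an induced path on `n + 2` vertices.
-/

namespace SimpleGraph

variable {V : Type*} {G : SimpleGraph V} {n : ℕ}

theorem IsIndepSet.colorable_succ {s : Set V} (hs : G.IsIndepSet s)
    (h : (G.induce sᶜ).Colorable n) : G.Colorable (n + 1) := by
  classical
  obtain ⟨C, hC⟩ := ((G.induce sᶜ).colorable_iff_exists_bdd_nat_coloring n).1 h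
  refine (G.colorable_iff_exists_bdd_nat_coloring (n + 1)).2
    ⟨Coloring.mk (fun v => if hv : v ∈ s then n else C ⟨v, hv⟩) fun {u v} huv => ?_,
      fun v => ?_⟩
  · by_cases hu : u ∈ s <;> by_cases hv : v ∈ s <;> simp only [hu, hv, dite_true, dite_false]
    · exact absurd huv (hs hu hv (G.ne_of_adj huv))
    · exact (hC ⟨v, hv⟩).ne'
    · exact (hC ⟨u, hu⟩).ne
    · exact C.valid (G := G.induce sᶜ) huv
  · show (if hv : v ∈ s then n else C ⟨v, hv⟩) < n + 1
    split_ifs with hv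
    · exact n.lt_succ_self
    · exact (hC ⟨v, hv⟩).trans n.lt_succ_self

theorem Preconnected.exists_adj_of_not_colorable (hG : G.Preconnected)
    (hcol : ¬G.Colorable (n + 1)) (v : V) : ∃ u, G.Adj v u := by
  have : Nontrivial V := by
    by_contra h
    have : Subsingleton V := not_nontrivial_iff_subsingleton.1 h
    exact hcol (Colorable.mono (by omega)
      ⟨Coloring.mk (fun _ => (0 : Fin 1)) fun huv _ => G.ne_of_adj huv (Subsingleton.elim _ _)⟩)
  exact hG.exists_adj_of_nontrivial v

theorem exists_pathGraph_embedding_cons {m : ℕ} (f : pathGraph (m + 1) ↪g G) {q : V}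
    (hq : ∀ i, f i ≠ q) (hadj : ∀ i, G.Adj q (f i) ↔ i = 0) :
    ∃ g : pathGraph (m + 2) ↪g G, g 0 = q := by
  have hinj : Function.Injective (Fin.cons q f : Fin (m + 2) → V) :=
    Fin.cons_injective_iff.2 ⟨fun ⟨i, hi⟩ => hq i hi, f.injective⟩
  refine ⟨⟨⟨Fin.cons q f, hinj⟩, fun {a b} => ?_⟩, rfl⟩
  change G.Adj (Fin.cons (α := fun _ => V) q f a) (Fin.cons (α := fun _ => V) q f b) ↔ _
  induction a using Fin.cases <;> induction b using Fin.cases <;>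
    simp only [Fin.cons_zero, Fin.cons_succ, G.irrefl, hadj, G.adj_comm _ q, f.map_adj_iff,
      pathGraph_adj, Fin.ext_iff, Fin.val_zero, Fin.val_succ] <;> grind

theorem exists_connected_not_colorable_induce_subset {A : Set V}
    (h : ¬(G.induce A).Colorable n) :
    ∃ D ⊆ A, (G.induce D).Connected ∧ ¬(G.induce D).Colorable n ∧
      ∀ u ∈ D, ∀ v ∈ A, G.Adj u v → v ∈ D := by
  obtain ⟨c, hc⟩ := not_forall.1 (mt (G.induce A).colorable_iff_forall_connectedComponent.2 h)
  let e : c.toSimpleGraph ↪g G := (Embedding.induce A).comp (Embedding.induce c.supp)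
  refine ⟨Set.range e, ?_, e.isoInduceRange.connected_iff.1 c.connected_toSimpleGraph,
    fun h => hc ((colorable_congr e.isoInduceRange).2 h), ?_⟩
  · rintro _ ⟨x, rfl⟩
    exact x.1.2
  · rintro _ ⟨x, rfl⟩ v hv huv
    refine ⟨⟨⟨v, hv⟩, ?_⟩, rfl⟩
    exact (ConnectedComponent.connectedComponentMk_eq_of_adj (v := x.1) (w := ⟨v, hv⟩)
      huv).symm.trans x.2

theorem Connected.exists_adj_notMem_of_closed (hG : G.Connected) {A D : Set V} {a b : V}
    (ha : a ∈ D) (hb : b ∉ D) (hD : ∀ u ∈ D, ∀ v ∈ A, G.Adj u v → v ∈ D) :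
    ∃ u ∈ D, ∃ v ∉ A, G.Adj u v := by
  obtain ⟨d, -, hd, hd'⟩ := (hG a b).some.exists_boundary_dart D ha hb
  exact ⟨d.fst, hd, d.snd, fun hA => hd' (hD _ hd _ hA d.adj), d.adj⟩

theorem Connected.exists_adj_induce_insert_connected_not_colorable (hG : G.Connected)
    (htri : G.CliqueFree 3) (hcol : ¬G.Colorable (n + 2)) (q : V) :
    ∃ w D, G.Adj q w ∧ (∀ v ∈ D, v ≠ q ∧ ¬G.Adj q v) ∧
      (G.induce (insert w D)).Connected ∧ ¬(G.induce (insert w D)).Colorable (n + 1) := by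
  have hA : ¬(G.induce (G.neighborSet q)ᶜ).Colorable (n + 1) :=
    fun h => hcol ((G.isIndepSet_neighborSet_of_triangleFree htri q).colorable_succ h)
  obtain ⟨D, hDA, hDconn, hDcol, hD⟩ := exists_connected_not_colorable_induce_subset hA
  -- in `G - N(q)` the vertex `q` is isolated, so a connected `D ∋ q` would be `{q}`
  have hqD : q ∉ D := fun hq => by
    obtain ⟨u, hu⟩ := hDconn.preconnected.exists_adj_of_not_colorable hDcol ⟨q, hq⟩
    exact hDA u.2 hu
  obtain ⟨u, huD, w, hw, huw⟩ := hG.exists_adj_notMem_of_closed hDconn.nonempty.some.2 hqD hD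
  refine ⟨w, D, not_not.1 hw, fun v hv => ⟨ne_of_mem_of_not_mem hv hqD, hDA hv⟩, ?_,
    fun h => hDcol (h.of_hom (G.induceHomOfLE (Set.subset_insert w D)).toHom)⟩
  rw [Set.insert_eq]
  exact connected_induce_union Preconnected.of_subsingleton hDconn.preconnected
    (Set.mem_singleton w) huD huw.symm

theorem Connected.exists_pathGraph_embedding_of_not_colorable (hG : G.Connected)
    (htri : G.CliqueFree 3) (hcol : ¬G.Colorable (n + 1)) (q : V) :
    ∃ f : pathGraph (n + 2) ↪g G, f 0 = q := by
  induction n generalizing V with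
  | zero =>
    obtain ⟨w, hqw⟩ := hG.preconnected.exists_adj_of_not_colorable hcol q
    refine exists_pathGraph_embedding_cons
      ⟨⟨fun _ => w, fun a b _ => Fin.ext (by omega)⟩, by simp [pathGraph_adj]⟩
      (fun _ => hqw.ne.symm) fun i => iff_of_true hqw (Fin.ext (by omega))
  | succ n ih =>
    obtain ⟨w, D, hqw, hD, hconn, hcol'⟩ :=
      hG.exists_adj_induce_insert_connected_not_colorable htri hcol q
    obtain ⟨f, hf⟩ := ih hconn (htri.comap (Embedding.induce _).isContained) hcol'
      ⟨w, Set.mem_insert w D⟩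
    have hfD : ∀ i ≠ 0, (f i).1 ∈ D := fun i hi =>
      (f i).2.resolve_left fun h => hi <| f.injective <| by rw [hf]; exact Subtype.ext h
    refine exists_pathGraph_embedding_cons ((Embedding.induce _).comp f) (fun i hi => ?_)
      fun i => ⟨fun h => by_contra fun h0 => (hD _ (hfD i h0)).2 h, ?_⟩
    · by_cases h0 : i = 0
      · subst h0
        exact hqw.ne' (by simpa [hf] using hi)
      · exact (hD _ (hfD i h0)).1 hi
    · rintro rfl
      simpa [hf] using hqw

theorem CliqueFree.pathGraph_isIndContained_of_not_colorable (htri : G.CliqueFree 3)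
    (hcol : ¬G.Colorable (n + 1)) : pathGraph (n + 2) ⊴ G := by
  obtain ⟨c, hc⟩ := not_forall.1 (mt G.colorable_iff_forall_connectedComponent.2 hcol)
  have hconn := c.connected_toSimpleGraph
  obtain ⟨f, -⟩ := hconn.exists_pathGraph_embedding_of_not_colorable
    (htri.comap (Embedding.induce c.supp).isContained) hc hconn.nonempty.some
  exact ⟨(Embedding.induce c.supp).comp f⟩

end SimpleGraph

theorem stmt6_general {V : Type*} (G : SimpleGraph V) (r : ℕ) (hr : 3 ≤ r)
    (htri : G.CliqueFree 3)
    (hP : IsEmpty (SimpleGraph.pathGraph r ↪g G)) :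
    G.Colorable (r - 1) := by
  obtain ⟨n, rfl⟩ : ∃ n, r = n + 2 := ⟨r - 2, by omega⟩
  by_contra hcol
  obtain ⟨f⟩ := htri.pathGraph_isIndContained_of_not_colorable (n := n) hcol
  exact hP.false f

/-- Every triangle-free graph with no induced path on `r` vertices is `(r-1)`-colourable,
for `r ≥ 3`. -/
theorem stmt6 {V : Type*} [Fintype V] (G : SimpleGraph V) (r : ℕ) (hr : 3 ≤ r)
    (htri : G.CliqueFree 3)
    (hP : IsEmpty (SimpleGraph.pathGraph r ↪g G)) :
    G.Colorable (r - 1) :=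
  stmt6_general G r hr htri hP
end

section
/- Let G be a graph, let I be a maximal independent set of G, let i be a colour, and suppose G has a proper colouring c respecting a list assignment L in which some vertices receive colour i. Then G also has a proper colouring respecting L in which the set of vertices coloured i is exactly W = {u ∈ I' : i ∈ L(u)} for some maximal independent set I' containing the original colour class of i. -/
/-- `I` is a maximal independent set of `G`. -/
def IsMaxIndep {V : Type*} (G : SimpleGraph V) (I : Set V) : Prop :=
  (∀ ⦃u⦄, u ∈ I → ∀ ⦃v⦄, v ∈ I → ¬ G.Adj u v) ∧
    ∀ J : Set V, (∀ ⦃u⦄, u ∈ J → ∀ ⦃v⦄, v ∈ J → ¬ G.Adj u v) → I ⊆ J → J = I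

/-- If `G` has a proper colouring `c` respecting the list assignment `L` in which some
vertex gets colour `i`, then `G` has a proper colouring `c'` respecting `L` whose colour
class of `i` is exactly `{u ∈ I' : i ∈ L u}` for some maximal independent set `I'`
containing the original colour class of `i`. -/
theorem stmt14 {V : Type*} [Fintype V] (G : SimpleGraph V) (L : V → Set ℕ)
    (c : V → ℕ) (i : ℕ)
    (hproper : ∀ ⦃u v⦄, G.Adj u v → c u ≠ c v)
    (hresp : ∀ v, c v ∈ L v)
    (hex : ∃ v, c v = i) :
    ∃ (I' : Set V) (c' : V → ℕ),
      IsMaxIndep G I' ∧ {v | c v = i} ⊆ I' ∧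
      (∀ ⦃u v⦄, G.Adj u v → c' u ≠ c' v) ∧ (∀ v, c' v ∈ L v) ∧
      {v | c' v = i} = {u ∈ I' | i ∈ L u} := by
  classical
  set S : Set (Set V) := {J | ∀ ⦃u⦄, u ∈ J → ∀ ⦃v⦄, v ∈ J → ¬ G.Adj u v}
  have hclass : {v | c v = i} ∈ S := by
    intro u hu v hv hadj
    exact hproper hadj (hu.trans hv.symm)
  obtain ⟨I', hsub, hmax⟩ := zorn_subset_nonempty S
    (fun ch hch hchain _ => by
      refine ⟨⋃₀ ch, ?_, fun s hs => Set.subset_sUnion_of_mem hs⟩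
      intro u hu v hv hadj
      obtain ⟨s, hs, hus⟩ := hu
      obtain ⟨t, ht, hvt⟩ := hv
      rcases hchain.total hs ht with h | h
      · exact hch ht (h hus) hvt hadj
      · exact hch hs hus (h hvt) hadj)
    {v | c v = i} hclass
  have hI'ind : ∀ ⦃u⦄, u ∈ I' → ∀ ⦃v⦄, v ∈ I' → ¬ G.Adj u v := hmax.1
  refine ⟨I', fun v => if v ∈ I' ∧ i ∈ L v then i else c v,
    ⟨hI'ind, fun J hJ hIJ => hmax.eq_of_ge hJ hIJ⟩, hsub, ?_, ?_, ?_⟩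
  · intro u v hadj
    by_cases hu : u ∈ I' ∧ i ∈ L u <;> by_cases hv : v ∈ I' ∧ i ∈ L v <;>
      simp only [hu, hv, if_pos, if_neg, if_true, if_false]
    · exact absurd hadj (hI'ind hu.1 hv.1)
    · intro h; exact hI'ind hu.1 (hsub h.symm) hadj
    · intro h; exact hI'ind (hsub h) hv.1 hadj
    · exact hproper hadj
  · intro v
    by_cases hv : v ∈ I' ∧ i ∈ L v
    · simp [hv]
    · simpa [hv] using hresp v
  · ext v
    simp only [Set.mem_setOf_eq, Set.mem_sep_iff]
    by_cases hv : v ∈ I' ∧ i ∈ L v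
    · simp [hv]
    · simp only [if_neg hv]
      constructor
      · intro h
        exact ⟨hsub h, h ▸ hresp v⟩
      · intro h; exact absurd h hv
end

section
/- For every integer s ≥ 1, an sP_2-free graph on n vertices has at most n^{2s} maximal independent sets. More precisely (Balas–Yu): the number of maximal independent sets in a graph with no induced subgraph isomorphic to s disjoint edges is bounded by a polynomial in n of degree depending only on s. -/
/-!
Let `S` be a maximal independent set of `G[W]` other than `W`. Choose `d ∈ W \ S` with the fewest
neighbours in `S` and a neighbour `e ∈ S` of `d`, and let `W'` be `W` minus the closed
neighbourhoods of `d` and `e`. Then `S ∩ W'` is a maximal independent set of `G[W']`, and any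
induced matching of `G[W']` extends by the edge `de`. By the minimality of `d`, a neighbour of `d`
in `W` with no neighbour in `(S ∩ W') ∪ {e}` must lie in `S`, so `S` is recovered from
`(d, e, S ∩ W')`. Hence if `G[W]` has no induced `(k+1)P₂`, it has at most `n²` times the maximum
number of maximal independent sets of a `G[W']` without induced `kP₂`, and induction on `k` gives
`n^(2k)`.
-/

/-- The graph `sP_2`: the disjoint union of `s` edges. -/
def sP2 (s : ℕ) : SimpleGraph (Fin s × Fin 2) :=
  SimpleGraph.fromRel (fun x y => x.1 = y.1)

open Finset

@[simp]
theorem sP2_adj {k : ℕ} {p q : Fin k × Fin 2} : (sP2 k).Adj p q ↔ p ≠ q ∧ p.1 = q.1 := by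
  simp [sP2, eq_comm]

namespace SimpleGraph

variable {V : Type*} (G : SimpleGraph V)

section

variable [DecidableEq V] [DecidableRel G.Adj]

def maximalIndepSetsIn (W : Finset V) : Finset (Finset V) :=
  W.powerset.filter fun S =>
    (∀ ⦃u⦄, u ∈ S → ∀ ⦃v⦄, v ∈ S → ¬ G.Adj u v) ∧ ∀ v ∈ W, v ∉ S → ∃ u ∈ S, G.Adj v u

def awayFrom (W : Finset V) (d e : V) : Finset V :=
  W.filter fun v => v ≠ d ∧ v ≠ e ∧ ¬ G.Adj d v ∧ ¬ G.Adj e v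

def reconstruct (W : Finset V) (d e : V) (S' : Finset V) : Finset V :=
  insert e S' ∪ W.filter fun v => G.Adj d v ∧ ¬ G.Adj v e ∧ ∀ u ∈ S', ¬ G.Adj v u

structure IsPivot (W S : Finset V) (d e : V) : Prop where
  d_mem : d ∈ W
  d_not_mem : d ∉ S
  e_mem : e ∈ S
  adj : G.Adj d e
  min_card : ∀ v ∈ W, v ∉ S → #(S.filter (G.Adj d ·)) ≤ #(S.filter (G.Adj v ·))

variable {G}

theorem mem_maximalIndepSetsIn {W S : Finset V} :
    S ∈ G.maximalIndepSetsIn W ↔ S ⊆ W ∧ (∀ ⦃u⦄, u ∈ S → ∀ ⦃v⦄, v ∈ S → ¬ G.Adj u v) ∧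
      ∀ v ∈ W, v ∉ S → ∃ u ∈ S, G.Adj v u := by
  simp [maximalIndepSetsIn]

theorem mem_awayFrom {W : Finset V} {d e v : V} :
    v ∈ G.awayFrom W d e ↔ v ∈ W ∧ v ≠ d ∧ v ≠ e ∧ ¬ G.Adj d v ∧ ¬ G.Adj e v := by
  simp [awayFrom]

theorem exists_isPivot {W S : Finset V} (hS : S ∈ G.maximalIndepSetsIn W) (h : (W \ S).Nonempty) :
    ∃ d e, G.IsPivot W S d e := by
  obtain ⟨d, hd, hmin⟩ := (W \ S).exists_min_image (fun v => #(S.filter (G.Adj v ·))) h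
  rw [mem_sdiff] at hd
  obtain ⟨e, he, hde⟩ := (mem_maximalIndepSetsIn.1 hS).2.2 d hd.1 hd.2
  exact ⟨d, e, hd.1, hd.2, he, hde, fun v hvW hvS => hmin v (mem_sdiff.2 ⟨hvW, hvS⟩)⟩

namespace IsPivot

variable {W S : Finset V} {d e : V}

theorem exists_adj_awayFrom (hS : S ∈ G.maximalIndepSetsIn W) (hp : G.IsPivot W S d e) {v : V}
    (hvW : v ∈ W) (hvS : v ∉ S) (hve : ¬ G.Adj v e) : ∃ u ∈ G.awayFrom S d e, G.Adj v u := by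
  by_contra! hv
  have hind := (mem_maximalIndepSetsIn.1 hS).2.1
  have hsub : S.filter (G.Adj v ·) ⊆ (S.filter (G.Adj d ·)).erase e := by
    intro u hu
    rw [mem_filter] at hu
    have hue : u ≠ e := by rintro rfl; exact hve hu.2
    have hud : u ≠ d := by rintro rfl; exact hp.d_not_mem hu.1
    have heu : ¬ G.Adj e u := hind hp.e_mem hu.1
    have hdu : G.Adj d u := by
      by_contra hdu
      exact hv u (mem_awayFrom.2 ⟨hu.1, hud, hue, hdu, heu⟩) hu.2
    exact mem_erase.2 ⟨hue, mem_filter.2 ⟨hu.1, hdu⟩⟩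
  have hlt : #(S.filter (G.Adj v ·)) < #(S.filter (G.Adj d ·)) :=
    (card_le_card hsub).trans_lt
      (card_erase_lt_of_mem (mem_filter.2 ⟨hp.e_mem, hp.adj⟩))
  exact (hp.min_card v hvW hvS).not_gt hlt

theorem awayFrom_mem_maximalIndepSetsIn (hS : S ∈ G.maximalIndepSetsIn W)
    (hp : G.IsPivot W S d e) :
    G.awayFrom S d e ∈ G.maximalIndepSetsIn (G.awayFrom W d e) := by
  obtain ⟨hSW, hind, -⟩ := mem_maximalIndepSetsIn.1 hS
  refine mem_maximalIndepSetsIn.2 ⟨filter_subset_filter _ hSW,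
    fun u hu v hv => hind (filter_subset _ _ hu) (filter_subset _ _ hv), fun v hv hvS' => ?_⟩
  obtain ⟨hvW, hvd, hve, hdv, hev⟩ := mem_awayFrom.1 hv
  have hvS : v ∉ S := fun hvS => hvS' (mem_awayFrom.2 ⟨hvS, hvd, hve, hdv, hev⟩)
  exact hp.exists_adj_awayFrom hS hvW hvS fun h => hev h.symm

theorem reconstruct_awayFrom (hS : S ∈ G.maximalIndepSetsIn W) (hp : G.IsPivot W S d e) :
    G.reconstruct W d e (G.awayFrom S d e) = S := by
  obtain ⟨hSW, hind, -⟩ := mem_maximalIndepSetsIn.1 hS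
  ext v
  simp only [reconstruct, mem_union, mem_insert, mem_filter]
  constructor
  · rintro ((rfl | hv) | ⟨hvW, hdv, hve, hv⟩)
    · exact hp.e_mem
    · exact (mem_awayFrom.1 hv).1
    · by_contra hvS
      obtain ⟨u, hu, hvu⟩ := hp.exists_adj_awayFrom hS hvW hvS hve
      exact hv u hu hvu
  · intro hvS
    by_cases hv : v ∈ G.awayFrom S d e
    · exact Or.inl (Or.inr hv)
    by_cases hve : v = e
    · exact Or.inl (Or.inl hve)
    refine Or.inr ⟨hSW hvS, ?_, hind hvS hp.e_mem, fun u hu => hind hvS (mem_awayFrom.1 hu).1⟩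
    by_contra hdv
    have hvd : v ≠ d := by rintro rfl; exact hp.d_not_mem hvS
    exact hv (mem_awayFrom.2 ⟨hvS, hvd, hve, hdv, hind hp.e_mem hvS⟩)

end IsPivot

theorem eq_of_mem_maximalIndepSetsIn {W S : Finset V} (hS : S ∈ G.maximalIndepSetsIn W)
    (hW : ∀ ⦃u⦄, u ∈ W → ∀ ⦃v⦄, v ∈ W → ¬ G.Adj u v) : S = W := by
  obtain ⟨hSW, -, hdom⟩ := mem_maximalIndepSetsIn.1 hS
  refine hSW.antisymm fun v hvW => ?_
  by_contra hvS
  obtain ⟨u, hu, hvu⟩ := hdom v hvW hvS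
  exact hW hvW (hSW hu) hvu

theorem card_maximalIndepSetsIn_le_one {W : Finset V}
    (hW : ∀ ⦃u⦄, u ∈ W → ∀ ⦃v⦄, v ∈ W → ¬ G.Adj u v) : #(G.maximalIndepSetsIn W) ≤ 1 :=
  card_le_one.2 fun _ hS _ hT =>
    (eq_of_mem_maximalIndepSetsIn hS hW).trans (eq_of_mem_maximalIndepSetsIn hT hW).symm

theorem maximalIndepSetsIn_subset_biUnion {W : Finset V} (hW : ∃ u ∈ W, ∃ v ∈ W, G.Adj u v) :
    G.maximalIndepSetsIn W ⊆ ((W ×ˢ W).filter fun p => G.Adj p.1 p.2).biUnion fun p =>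
      (G.maximalIndepSetsIn (G.awayFrom W p.1 p.2)).image (G.reconstruct W p.1 p.2) := by
  intro S hS
  have hWS : (W \ S).Nonempty := by
    rw [sdiff_nonempty]
    intro hWS
    obtain ⟨u, hu, v, hv, huv⟩ := hW
    exact (mem_maximalIndepSetsIn.1 hS).2.1 (hWS hu) (hWS hv) huv
  obtain ⟨d, e, hp⟩ := exists_isPivot hS hWS
  refine mem_biUnion.2 ⟨(d, e), mem_filter.2 ⟨mem_product.2 ⟨hp.d_mem,
    (mem_maximalIndepSetsIn.1 hS).1 hp.e_mem⟩, hp.adj⟩, mem_image.2 ⟨G.awayFrom S d e,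
      hp.awayFrom_mem_maximalIndepSetsIn hS, hp.reconstruct_awayFrom hS⟩⟩

theorem exists_embedding_sP2_succ {k : ℕ} {W : Finset V} {d e : V} (hd : d ∈ W) (he : e ∈ W)
    (hde : G.Adj d e) (f : sP2 k ↪g G) (hf : ∀ x, f x ∈ G.awayFrom W d e) :
    ∃ g : sP2 (k + 1) ↪g G, ∀ x, g x ∈ W := by
  simp only [awayFrom, mem_filter] at hf
  have hfd : ∀ x, f x ≠ d := fun x => (hf x).2.1
  have hfe : ∀ x, f x ≠ e := fun x => (hf x).2.2.1
  have hdf : ∀ x, ¬ G.Adj d (f x) := fun x => (hf x).2.2.2.1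
  have hef : ∀ x, ¬ G.Adj e (f x) := fun x => (hf x).2.2.2.2
  have hdf' : ∀ x, ¬ G.Adj (f x) d := fun x h => hdf x h.symm
  have hef' : ∀ x, ¬ G.Adj (f x) e := fun x h => hef x h.symm
  let g : Fin (k + 1) × Fin 2 → V := fun p => Fin.lastCases (![d, e] p.2) (fun i => f (i, p.2)) p.1
  have hg : ∀ p q, G.Adj (g p) (g q) ↔ (sP2 (k + 1)).Adj p q := by
    rintro ⟨i, a⟩ ⟨j, b⟩
    induction i using Fin.lastCases <;> induction j using Fin.lastCases <;> fin_cases a <;>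
      fin_cases b <;>
      simp [g, hde, hde.symm, hdf, hef, hdf', hef', Fin.castSucc_ne_last,
        (Fin.castSucc_ne_last _).symm]
  have hginj : Function.Injective g := by
    rintro ⟨i, a⟩ ⟨j, b⟩
    induction i using Fin.lastCases <;> induction j using Fin.lastCases <;> fin_cases a <;>
      fin_cases b <;>
      simp [g, hde.ne, hde.ne.symm, hfd, hfe, (hfd _).symm, (hfe _).symm]
  refine ⟨⟨⟨g, hginj⟩, hg _ _⟩, ?_⟩
  rintro ⟨i, a⟩
  induction i using Fin.lastCases <;> fin_cases a <;> simp [g, hd, he, (hf _).1]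

theorem card_maximalIndepSetsIn_le [Fintype V] [Nonempty V] (k : ℕ) (W : Finset V)
    (hW : ∀ f : sP2 k ↪g G, ¬ ∀ x, f x ∈ W) :
    #(G.maximalIndepSetsIn W) ≤ (Fintype.card V ^ 2) ^ k := by
  induction k generalizing W with
  | zero => exact (hW ⟨⟨isEmptyElim, fun x => isEmptyElim x⟩, fun {x} => isEmptyElim x⟩
      fun x => isEmptyElim x).elim
  | succ k ih =>
    by_cases hedge : ∃ u ∈ W, ∃ v ∈ W, G.Adj u v
    · have hsub : ∀ p ∈ (W ×ˢ W).filter (fun p => G.Adj p.1 p.2),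
          #((G.maximalIndepSetsIn (G.awayFrom W p.1 p.2)).image (G.reconstruct W p.1 p.2)) ≤
            (Fintype.card V ^ 2) ^ k := by
        rintro ⟨d, e⟩ hp
        obtain ⟨hde, hadj⟩ := mem_filter.1 hp
        rw [mem_product] at hde
        refine card_image_le.trans (ih _ fun f hf => ?_)
        obtain ⟨g, hg⟩ := exists_embedding_sP2_succ hde.1 hde.2 hadj f hf
        exact hW g hg
      calc #(G.maximalIndepSetsIn W)
          ≤ #((W ×ˢ W).filter fun p => G.Adj p.1 p.2) * (Fintype.card V ^ 2) ^ k :=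
            (card_le_card (maximalIndepSetsIn_subset_biUnion hedge)).trans
              (card_biUnion_le_card_mul _ _ _ hsub)
        _ ≤ Fintype.card (V × V) * (Fintype.card V ^ 2) ^ k := by
            gcongr; exact card_le_univ _
        _ = (Fintype.card V ^ 2) ^ (k + 1) := by
            rw [Fintype.card_prod]; ring
    · push Not at hedge
      exact (card_maximalIndepSetsIn_le_one hedge).trans (Nat.one_le_pow _ _ (by positivity))

theorem coe_maximalIndepSetsIn_univ [Fintype V] :
    (G.maximalIndepSetsIn univ : Set (Finset V)) =
      {S : Finset V | (∀ ⦃u⦄, u ∈ S → ∀ ⦃v⦄, v ∈ S → ¬ G.Adj u v) ∧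
        ∀ T : Finset V, (∀ ⦃u⦄, u ∈ T → ∀ ⦃v⦄, v ∈ T → ¬ G.Adj u v) → S ⊆ T → T = S} := by
  ext S
  simp only [mem_coe, mem_maximalIndepSetsIn, subset_univ, mem_univ, true_implies, true_and,
    Set.mem_ofPred_eq, and_congr_right_iff]
  intro hind
  constructor
  · intro hdom T hT hST
    refine (hST.antisymm fun x hxT => ?_).symm
    by_contra hxS
    obtain ⟨u, hu, hxu⟩ := hdom x hxS
    exact hT hxT (hST hu) hxu
  · intro hmax v hvS
    by_contra! hv
    have hins : ∀ ⦃a⦄, a ∈ insert v S → ∀ ⦃b⦄, b ∈ insert v S → ¬ G.Adj a b := by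
      simp only [mem_insert]
      rintro a (rfl | ha) b (rfl | hb) hab
      · exact G.irrefl hab
      · exact hv b hb hab
      · exact hv a ha hab.symm
      · exact hind ha hb hab
    exact hvS (hmax _ hins (subset_insert v S) ▸ mem_insert_self v S)

end

end SimpleGraph

theorem stmt15_general {V : Type*} [Fintype V] [Nonempty V] (G : SimpleGraph V)
    (s : ℕ)
    (hfree : IsEmpty (sP2 s ↪g G)) :
    {S : Finset V | (∀ ⦃u⦄, u ∈ S → ∀ ⦃v⦄, v ∈ S → ¬ G.Adj u v) ∧
        ∀ T : Finset V, (∀ ⦃u⦄, u ∈ T → ∀ ⦃v⦄, v ∈ T → ¬ G.Adj u v) → S ⊆ T → T = S}.ncard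
      ≤ (Fintype.card V) ^ (2 * s) := by
  classical
  rw [← SimpleGraph.coe_maximalIndepSetsIn_univ, Set.ncard_coe_finset, pow_mul]
  exact SimpleGraph.card_maximalIndepSetsIn_le s univ fun f _ => hfree.false f

/-- Balas–Yu: an `sP_2`-free graph on `n ≥ 1` vertices has at most `n^(2s)` maximal
independent sets. -/
theorem stmt15 {V : Type*} [Fintype V] [Nonempty V] (G : SimpleGraph V)
    (s : ℕ) (hs : 1 ≤ s)
    (hfree : IsEmpty (sP2 s ↪g G)) :
    {S : Finset V | (∀ ⦃u⦄, u ∈ S → ∀ ⦃v⦄, v ∈ S → ¬ G.Adj u v) ∧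
        ∀ T : Finset V, (∀ ⦃u⦄, u ∈ T → ∀ ⦃v⦄, v ∈ T → ¬ G.Adj u v) → S ⊆ T → T = S}.ncard
      ≤ (Fintype.card V) ^ (2 * s) :=
  stmt15_general G s hfree
end

section
/- In the precolouring-extension gadget construction: let G be a complete bipartite graph with list assignment L, let X be the union of all lists, and let G' be obtained from G by attaching, for each vertex u of G, |X| - |L(u)| pendant vertices precoloured with the distinct colours of X \ L(u). Then G has a proper colouring respecting L if and only if the precolouring of G' extends to a proper |X|-colouring of G'. Moreover G' is (C_3, P_6)-free. -/
private lemma aux_adj {α β : Type*} (L : α ⊕ β → Finset ℕ) (X : Finset ℕ)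
    (a b : (α ⊕ β) ⊕ (Σ u : α ⊕ β, {x : ℕ // x ∈ X \ L u})) :
    (SimpleGraph.fromRel (fun a b =>
      (∃ u v : α ⊕ β, a = Sum.inl u ∧ b = Sum.inl v ∧ (completeBipartiteGraph α β).Adj u v) ∨
      (∃ p : (Σ u : α ⊕ β, {x : ℕ // x ∈ X \ L u}), a = Sum.inl p.1 ∧ b = Sum.inr p))).Adj a b ↔
    (∃ u v : α ⊕ β, a = Sum.inl u ∧ b = Sum.inl v ∧ (completeBipartiteGraph α β).Adj u v) ∨
    (∃ p : (Σ u : α ⊕ β, {x : ℕ // x ∈ X \ L u}), a = Sum.inl p.1 ∧ b = Sum.inr p) ∨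
    (∃ p : (Σ u : α ⊕ β, {x : ℕ // x ∈ X \ L u}), a = Sum.inr p ∧ b = Sum.inl p.1) := by
  rw [SimpleGraph.fromRel_adj]
  constructor
  · rintro ⟨hne, (⟨u, v, rfl, rfl, h⟩ | ⟨p, rfl, rfl⟩) | (⟨u, v, rfl, rfl, h⟩ | ⟨p, rfl, rfl⟩)⟩
    · exact Or.inl ⟨u, v, rfl, rfl, h⟩
    · exact Or.inr (Or.inl ⟨p, rfl, rfl⟩)
    · exact Or.inl ⟨v, u, rfl, rfl, h.symm⟩
    · exact Or.inr (Or.inr ⟨p, rfl, rfl⟩)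
  · rintro (⟨u, v, rfl, rfl, h⟩ | ⟨p, rfl, rfl⟩ | ⟨p, rfl, rfl⟩)
    · exact ⟨by simpa using h.ne, Or.inl (Or.inl ⟨u, v, rfl, rfl, h⟩)⟩
    · exact ⟨by simp, Or.inl (Or.inr ⟨p, rfl, rfl⟩)⟩
    · exact ⟨by simp, Or.inr (Or.inr ⟨p, rfl, rfl⟩)⟩

private lemma aux_tri {α β : Type*} {u v w : α ⊕ β}
    (h1 : (completeBipartiteGraph α β).Adj u v) (h2 : (completeBipartiteGraph α β).Adj v w)
    (h3 : (completeBipartiteGraph α β).Adj u w) : False := by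
  rcases u with x | x <;> rcases v with y | y <;> rcases w with z | z <;>
    simp_all [completeBipartiteGraph_adj]

private lemma aux_par {α β : Type*} {u1 u2 u3 u4 : α ⊕ β}
    (h12 : (completeBipartiteGraph α β).Adj u1 u2)
    (h23 : (completeBipartiteGraph α β).Adj u2 u3)
    (h34 : (completeBipartiteGraph α β).Adj u3 u4) :
    (completeBipartiteGraph α β).Adj u1 u4 := by
  rcases u1 with x | x <;> rcases u2 with y | y <;> rcases u3 with z | z <;>
    rcases u4 with w | w <;> simp_all [completeBipartiteGraph_adj]

/-- The reduction proving Precolouring Extension NP-complete for `(C_3, P_6)`-free graphs: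
`G'` is obtained from the complete bipartite graph on `α ⊕ β` with list assignment `L` by
attaching, for each vertex `u` and each colour `x ∈ X \ L u` (where `X` is the union of
all lists), a pendant vertex precoloured `x`. Then the complete bipartite graph has a
proper colouring respecting `L` iff the precolouring of `G'` extends to a proper colouring
of `G'` with colours taken from `X`; moreover `G'` is `(C_3, P_6)`-free. -/
theorem stmt18 {α β : Type*} [Fintype α] [Fintype β]
    (L : α ⊕ β → Finset ℕ)
    (X : Finset ℕ) (hX : X = Finset.univ.sup L)
    (G' : SimpleGraph ((α ⊕ β) ⊕ (Σ u : α ⊕ β, {x : ℕ // x ∈ X \ L u})))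
    (hG' : G' = SimpleGraph.fromRel (fun a b =>
      (∃ u v : α ⊕ β, a = Sum.inl u ∧ b = Sum.inl v ∧ (completeBipartiteGraph α β).Adj u v) ∨
      (∃ p : (Σ u : α ⊕ β, {x : ℕ // x ∈ X \ L u}), a = Sum.inl p.1 ∧ b = Sum.inr p))) :
    ((∃ c : α ⊕ β → ℕ,
        (∀ ⦃u v⦄, (completeBipartiteGraph α β).Adj u v → c u ≠ c v) ∧ ∀ u, c u ∈ L u) ↔
      (∃ c' : ((α ⊕ β) ⊕ (Σ u : α ⊕ β, {x : ℕ // x ∈ X \ L u})) → ℕ,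
        (∀ ⦃a b⦄, G'.Adj a b → c' a ≠ c' b) ∧ (∀ z, c' z ∈ X) ∧
        ∀ p : (Σ u : α ⊕ β, {x : ℕ // x ∈ X \ L u}), c' (Sum.inr p) = (p.2 : ℕ)))
    ∧ IsEmpty (SimpleGraph.cycleGraph 3 ↪g G')
    ∧ IsEmpty (SimpleGraph.pathGraph 6 ↪g G') := by
  have hadj : ∀ a b, G'.Adj a b ↔
      (∃ u v : α ⊕ β, a = Sum.inl u ∧ b = Sum.inl v ∧ (completeBipartiteGraph α β).Adj u v) ∨
      (∃ p : (Σ u : α ⊕ β, {x : ℕ // x ∈ X \ L u}), a = Sum.inl p.1 ∧ b = Sum.inr p) ∨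
      (∃ p : (Σ u : α ⊕ β, {x : ℕ // x ∈ X \ L u}), a = Sum.inr p ∧ b = Sum.inl p.1) := by
    intro a b; rw [hG']; exact aux_adj L X a b
  -- neighbours of a pendant vertex
  have pend : ∀ (p : Σ u : α ⊕ β, {x : ℕ // x ∈ X \ L u}) b,
      G'.Adj b (Sum.inr p) → b = Sum.inl p.1 := by
    intro p b h
    rcases (hadj b (Sum.inr p)).1 h with ⟨u, v, _, hb, _⟩ | ⟨q, rfl, hq⟩ | ⟨q, _, hq⟩
    · exact absurd hb (by simp)
    · rw [Sum.inr.injEq] at hq; rw [hq]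
    · exact absurd hq (by simp)
  have pend' : ∀ (p : Σ u : α ⊕ β, {x : ℕ // x ∈ X \ L u}) b,
      G'.Adj (Sum.inr p) b → b = Sum.inl p.1 := fun p b h => pend p b h.symm
  -- bipartite adjacency between two inl vertices
  have bip : ∀ u v : α ⊕ β, G'.Adj (Sum.inl u) (Sum.inl v) →
      (completeBipartiteGraph α β).Adj u v := by
    intro u v h
    rcases (hadj _ _).1 h with ⟨u', v', hu, hv, hh⟩ | ⟨q, _, hq⟩ | ⟨q, hq, _⟩
    · rw [Sum.inl.injEq] at hu hv; rw [hu, hv]; exact hh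
    · exact absurd hq (by simp)
    · exact absurd hq (by simp)
  refine ⟨?_, ?_, ?_⟩
  · constructor
    · rintro ⟨c, hc, hcL⟩
      refine ⟨Sum.elim c (fun p => (p.2 : ℕ)), ?_, ?_, fun p => rfl⟩
      · intro a b h
        rcases (hadj a b).1 h with ⟨u, v, rfl, rfl, hh⟩ | ⟨p, rfl, rfl⟩ | ⟨p, rfl, rfl⟩
        · exact hc hh
        · intro heq
          have hm := p.2.2; rw [Finset.mem_sdiff] at hm
          simp only [Sum.elim_inl, Sum.elim_inr] at heq
          exact hm.2 (heq ▸ hcL p.1)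
        · intro heq
          have hm := p.2.2; rw [Finset.mem_sdiff] at hm
          simp only [Sum.elim_inl, Sum.elim_inr] at heq
          exact hm.2 (heq ▸ hcL p.1)
      · rintro (u | p)
        · have hsub : L u ⊆ Finset.univ.sup L := Finset.le_sup (Finset.mem_univ u)
          exact hX ▸ hsub (hcL u)
        · exact (Finset.mem_sdiff.1 p.2.2).1
    · rintro ⟨c', hc', hc'X, hc'p⟩
      refine ⟨fun u => c' (Sum.inl u), fun u v h => ?_, fun u => ?_⟩
      · exact hc' ((hadj _ _).2 (Or.inl ⟨u, v, rfl, rfl, h⟩))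
      · by_contra hnot
        have hmem : c' (Sum.inl u) ∈ X \ L u := Finset.mem_sdiff.2 ⟨hc'X _, hnot⟩
        have hadj' : G'.Adj (Sum.inl u) (Sum.inr ⟨u, ⟨c' (Sum.inl u), hmem⟩⟩) :=
          (hadj _ _).2 (Or.inr (Or.inl ⟨⟨u, ⟨c' (Sum.inl u), hmem⟩⟩, rfl, rfl⟩))
        exact hc' hadj' (by rw [hc'p])
  · constructor
    intro e
    have h01 : G'.Adj (e 0) (e 1) := e.map_rel_iff.2 (by decide)
    have h12 : G'.Adj (e 1) (e 2) := e.map_rel_iff.2 (by decide)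
    have h02 : G'.Adj (e 0) (e 2) := e.map_rel_iff.2 (by decide)
    -- no vertex is a pendant
    obtain ⟨u0, hu0⟩ : ∃ u, e 0 = Sum.inl u := by
      rcases he : e 0 with u | p
      · exact ⟨u, rfl⟩
      · exfalso
        have h1 := pend' p (e 1) (he ▸ h01)
        have h2 := pend' p (e 2) (he ▸ h02)
        exact absurd (e.injective (h1.trans h2.symm)) (by decide)
    obtain ⟨u1, hu1⟩ : ∃ u, e 1 = Sum.inl u := by
      rcases he : e 1 with u | p
      · exact ⟨u, rfl⟩
      · exfalso
        have h1 := pend p (e 0) (he ▸ h01)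
        have h2 := pend' p (e 2) (he ▸ h12)
        exact absurd (e.injective (h1.trans h2.symm)) (by decide)
    obtain ⟨u2, hu2⟩ : ∃ u, e 2 = Sum.inl u := by
      rcases he : e 2 with u | p
      · exact ⟨u, rfl⟩
      · exfalso
        have h1 := pend p (e 0) (he ▸ h02)
        have h2 := pend p (e 1) (he ▸ h12)
        exact absurd (e.injective (h1.trans h2.symm)) (by decide)
    have b01 := bip u0 u1 (hu0 ▸ hu1 ▸ h01)
    have b12 := bip u1 u2 (hu1 ▸ hu2 ▸ h12)
    have b02 := bip u0 u2 (hu0 ▸ hu2 ▸ h02)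
    exact aux_tri b01 b12 b02
  · constructor
    intro e
    have h01 : G'.Adj (e 0) (e 1) := e.map_rel_iff.2 (by rw [SimpleGraph.pathGraph_adj]; decide)
    have h12 : G'.Adj (e 1) (e 2) := e.map_rel_iff.2 (by rw [SimpleGraph.pathGraph_adj]; decide)
    have h23 : G'.Adj (e 2) (e 3) := e.map_rel_iff.2 (by rw [SimpleGraph.pathGraph_adj]; decide)
    have h34 : G'.Adj (e 3) (e 4) := e.map_rel_iff.2 (by rw [SimpleGraph.pathGraph_adj]; decide)
    have h45 : G'.Adj (e 4) (e 5) := e.map_rel_iff.2 (by rw [SimpleGraph.pathGraph_adj]; decide)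
    have h14 : ¬ G'.Adj (e 1) (e 4) := fun h =>
      absurd (e.map_rel_iff.1 h) (by rw [SimpleGraph.pathGraph_adj]; decide)
    have notpend : ∀ (i j k : Fin 6), j ≠ k → G'.Adj (e j) (e i) → G'.Adj (e i) (e k) →
        ∃ u, e i = Sum.inl u := by
      intro i j k hjk ha hb
      rcases he : e i with u | p
      · exact ⟨u, rfl⟩
      · exfalso
        have h1 := pend p (e j) (he ▸ ha)
        have h2 := pend' p (e k) (he ▸ hb)
        exact hjk (e.injective (h1.trans h2.symm))
    obtain ⟨u1, hu1⟩ := notpend 1 0 2 (by decide) h01 h12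
    obtain ⟨u2, hu2⟩ := notpend 2 1 3 (by decide) h12 h23
    obtain ⟨u3, hu3⟩ := notpend 3 2 4 (by decide) h23 h34
    obtain ⟨u4, hu4⟩ := notpend 4 3 5 (by decide) h34 h45
    have b12 := bip u1 u2 (hu1 ▸ hu2 ▸ h12)
    have b23 := bip u2 u3 (hu2 ▸ hu3 ▸ h23)
    have b34 := bip u3 u4 (hu3 ▸ hu4 ▸ h34)
    have b14 : (completeBipartiteGraph α β).Adj u1 u4 := aux_par b12 b23 b34
    exact h14 (hu1 ▸ hu4 ▸ (hadj _ _).2 (Or.inl ⟨u1, u4, rfl, rfl, b14⟩))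
end
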